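/- Let R be a Noetherian ring of prime characteristic p, M an R-module, I = (x_1, …, x_k) an ideal of R, z ∈ I* an element of the tight closure of I, and m ∈ M an element with x_i m ∈ 0*_M for all i = 1, …, k. Then z m ∈ 0*_M. Equivalently, for every ideal I, (0*_M :_M I*) = (0*_M :_M I). -/

import Mathlib

open scoped TensorProduct Pointwise

universe u v w

section TightClosureDefs

variable (R : Type u) [CommRing R] (p : ℕ)

/-- `R^o`: the complement of the union of the minimal primes of `R`. -/
def Ro : Set R := {c | ∀ P ∈ minimalPrimes R, c ∉ P}

/-- The Frobenius power `I^{[q]}` of an ideal: the ideal generated by the `q`-th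
powers of the elements of `I`. -/
def frobeniusPower (I : Ideal R) (q : ℕ) : Ideal R :=
  Ideal.span ((fun x => x ^ q) '' (I : Set R))

/-- The tight closure `I*` of an ideal `I`: all `x` such that `c x^q ∈ I^{[q]}` for some
`c ∈ R^o` and all `q = p^e ≫ 0`. -/
def idealTC (I : Ideal R) : Set R :=
  {x | ∃ c ∈ Ro R, ∃ e₀ : ℕ, ∀ e ≥ e₀, c * x ^ p ^ e ∈ frobeniusPower R I (p ^ e)}

/-- `R^e`: `R` viewed as an `R`-algebra via the `e`-th iterated Frobenius `r ↦ r^{p^e}`. -/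
def FrobAlg (R : Type u) [CommRing R] (_p _e : ℕ) : Type u := R

instance FrobAlg.instCommRing (e : ℕ) : CommRing (FrobAlg R p e) := inferInstanceAs (CommRing R)

noncomputable instance FrobAlg.instAlgebra (e : ℕ) [ExpChar R p] : Algebra R (FrobAlg R p e) :=
  (iterateFrobenius R p e).toAlgebra

/-- The identity map of `R` into `FrobAlg R p e`. -/
def FrobAlg.mk (e : ℕ) : R → FrobAlg R p e := id

variable [ExpChar R p]

/-- `N^{[p^e]}_M`: the image of `F^e(N) → F^e(M)`, where `F^e(M) = R^e ⊗_R M` is the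
`e`-th Frobenius functor. -/
noncomputable def submoduleFrobPow {M : Type v} [AddCommGroup M] [Module R M]
    (N : Submodule R M) (e : ℕ) : Submodule R (FrobAlg R p e ⊗[R] M) :=
  LinearMap.range (LinearMap.lTensor (FrobAlg R p e) N.subtype)

/-- The tight closure `N*_M` of a submodule `N ⊆ M`: all `m` such that
`c ⊗ m ∈ N^{[q]}_M` for some `c ∈ R^o` and all `q = p^e ≫ 0`. -/
noncomputable def moduleTC {M : Type v} [AddCommGroup M] [Module R M]
    (N : Submodule R M) : Set M :=
  {m | ∃ c ∈ Ro R, ∃ e₀ : ℕ, ∀ e ≥ e₀,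
    (FrobAlg.mk R p e c) ⊗ₜ[R] m ∈ submoduleFrobPow R p N e}

/-- The finitistic tight closure `N*fg_M`: the union of `(N ∩ M')*_{M'}` over all
finitely generated submodules `M' ⊆ M`. -/
noncomputable def finitisticTC {M : Type v} [AddCommGroup M] [Module R M]
    (N : Submodule R M) : Set M :=
  ⋃ (M' : Submodule R M) (_ : M'.FG),
    (M'.subtype '' moduleTC R p (N.comap M'.subtype))

/-- A test element: `c ∈ R^o` such that `c I* ⊆ I` for every ideal `I`. -/
def IsTestElement (c : R) : Prop :=
  c ∈ Ro R ∧ ∀ I : Ideal R, ∀ x ∈ idealTC R p I, c * x ∈ I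

/-- A module test element: `c ∈ R^o` such that for every finitely generated module `M`,
every submodule `N ⊆ M`, every `x ∈ N*_M` and every `q = p^e`, `c ⊗ x ∈ N^{[q]}_M`. -/
def IsModuleTestElement (c : R) : Prop :=
  c ∈ Ro R ∧ ∀ (M : Type u) [AddCommGroup M] [Module R M], Module.Finite R M →
    ∀ (N : Submodule R M), ∀ x ∈ moduleTC R p N, ∀ e : ℕ,
      (FrobAlg.mk R p e c) ⊗ₜ[R] x ∈ submoduleFrobPow R p N e

/-- The annihilator, inside the Matlis-type dual `Hom_R(M, E)`, of a subset `S ⊆ M`. -/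
def annihilatorIn {M : Type v} {E : Type w} [AddCommGroup M] [Module R M]
    [AddCommGroup E] [Module R E] (S : Set M) : Submodule R (M →ₗ[R] E) where
  carrier := {f | ∀ x ∈ S, f x = 0}
  add_mem' := by intro f g hf hg x hx; simp [hf x hx, hg x hx]
  zero_mem' := by intro x hx; simp
  smul_mem' := by intro r f hf x hx; simp [hf x hx]

/-- The product `s · T` of a set of ring elements and a submodule: the submodule
generated by all products `a • t` with `a ∈ s`, `t ∈ T`. -/
def setSMulSubmodule {M : Type v} [AddCommGroup M] [Module R M]
    (s : Set R) (T : Submodule R M) : Submodule R M :=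
  Submodule.span R (s • (T : Set M))

/-- `E` is an injective hull of `M` over `R`: `E` is an injective module admitting an
essential embedding of `M`. -/
def IsInjectiveHull (M : Type v) (E : Type w) [AddCommGroup M] [Module R M]
    [AddCommGroup E] [Module R E] : Prop :=
  Module.Injective R E ∧ ∃ ι : M →ₗ[R] E, Function.Injective ι ∧
    ∀ N : Submodule R E, N ≠ ⊥ → N ⊓ LinearMap.range ι ≠ ⊥

/-- The test ideal `τ(R) = ⋂_M Ann_R (0*_M)`, where `M` runs through all finitely
generated `R`-modules. -/
noncomputable def testIdeal : Ideal R where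
  carrier := {c | ∀ (M : Type u) [AddCommGroup M] [Module R M], Module.Finite R M →
    ∀ x ∈ moduleTC R p (⊥ : Submodule R M), c • x = 0}
  add_mem' := by
    intro a b ha hb M _ _ hfin x hx
    rw [add_smul, ha M hfin x hx, hb M hfin x hx, add_zero]
  zero_mem' := by intro M _ _ hfin x hx; rw [zero_smul]
  smul_mem' := by
    intro r a ha M _ _ hfin x hx
    rw [smul_eq_mul, mul_smul, ha M hfin x hx, smul_zero]

/-- An `F`-finite ring: `R` is finitely generated as a module over its subring of
`p`-th powers, i.e. `R^1` is a finite `R`-module. -/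
def IsFFinite : Prop := Module.Finite R (FrobAlg R p 1)

/-- An ideal generated by a system of parameters: generated by `dim R` elements and
with radical the maximal ideal (i.e. primary to the maximal ideal). -/
def IsParameterIdeal [IsLocalRing R] (I : Ideal R) : Prop :=
  ∃ (n : ℕ) (x : Fin n → R), ringKrullDim R = n ∧ I = Ideal.span (Set.range x) ∧
    I.radical = IsLocalRing.maximalIdeal R

/-- The parameter test ideal `τ_par(R) = ⋂_I (I : I*)`, where `I` runs through the
ideals generated by systems of parameters. -/
def parameterTestIdeal [IsLocalRing R] : Ideal R where
  carrier := {c | ∀ I : Ideal R, IsParameterIdeal R I → ∀ z ∈ idealTC R p I, c * z ∈ I}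
  add_mem' := by
    intro a b ha hb I hI z hz
    rw [add_mul]; exact I.add_mem (ha I hI z hz) (hb I hI z hz)
  zero_mem' := by intro I hI z hz; rw [zero_mul]; exact I.zero_mem
  smul_mem' := by
    intro r a ha I hI z hz
    rw [smul_eq_mul, mul_assoc]; exact I.mul_mem_left r (ha I hI z hz)

/-- A parameter test element: an element of `τ_par(R) ∩ R^o`. -/
def IsParameterTestElement [IsLocalRing R] (c : R) : Prop :=
  c ∈ parameterTestIdeal R p ∧ c ∈ Ro R

end TightClosureDefs

/-- A Cohen–Macaulay local ring: a local ring admitting a system of parameters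
(`dim R` elements generating an ideal whose radical is the maximal ideal, here expressed
as the Jacobson radical `(⊥).jacobson`) that is a regular sequence. -/
def IsCohenMacaulayLocalRing (R : Type u) [CommRing R] : Prop :=
  IsLocalRing R ∧ ∃ (n : ℕ) (x : Fin n → R), ringKrullDim R = n ∧
    (Ideal.span (Set.range x)).radical = (⊥ : Ideal R).jacobson ∧
    RingTheory.Sequence.IsRegular R (List.ofFn x)


/-! If `cᵢ ⊗ xᵢ m = 0` in `F^e(M)` for each generator `xᵢ` of `I`, then `∏ cᵢ` kills `r ⊗ m`
for every `r ∈ I^{[q]} = (x₁^q, …, x_k^q)`, in particular for `r = c₀ z^q`. The colon identity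
follows since `I ⊆ I*` and `I` is finitely generated. -/
section

variable (R : Type u) [CommRing R]

def roSubmonoid : Submonoid R where
  carrier := Ro R
  one_mem' _ hP h := hP.1.1.ne_top ((Ideal.eq_top_iff_one _).2 h)
  mul_mem' ha hb P hP h := (hP.1.1.mem_or_mem h).elim (ha P hP) (hb P hP)

variable (p : ℕ)

theorem mem_idealTC_of_mem {I : Ideal R} {a : R} (ha : a ∈ I) : a ∈ idealTC R p I :=
  ⟨1, (roSubmonoid R).one_mem, 0, fun e _ => by
    rw [one_mul]
    exact Ideal.subset_span ⟨a, ha, rfl⟩⟩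

variable [ExpChar R p]

theorem frobeniusPower_span (s : Set R) (e : ℕ) :
    frobeniusPower R (Ideal.span s) (p ^ e) = Ideal.span ((· ^ p ^ e) '' s) :=
  Ideal.map_span (iterateFrobenius R p e) s

variable {M : Type v} [AddCommGroup M] [Module R M]

def FrobAlg.tmulAnnihilator (e : ℕ) (m : M) : Ideal R where
  carrier := {c | FrobAlg.mk R p e c ⊗ₜ[R] m = 0}
  add_mem' {a b} ha hb := by
    change (FrobAlg.mk R p e a + FrobAlg.mk R p e b) ⊗ₜ[R] m = 0
    rw [TensorProduct.add_tmul, ha, hb, add_zero]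
  zero_mem' := TensorProduct.zero_tmul _ m
  smul_mem' a c hc := by
    have := congrArg (LinearMap.rTensor M (LinearMap.mulLeft R (FrobAlg.mk R p e a))) hc
    have h : (FrobAlg.mk R p e a * FrobAlg.mk R p e c) ⊗ₜ[R] m = 0 := by simpa using this
    exact h

namespace FrobAlg

theorem mem_tmulAnnihilator {e : ℕ} {m : M} {c : R} :
    c ∈ tmulAnnihilator R p e m ↔ FrobAlg.mk R p e c ⊗ₜ[R] m = 0 :=
  Iff.rfl

theorem mem_tmulAnnihilator_smul {e : ℕ} {m : M} {a c : R} :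
    c ∈ tmulAnnihilator R p e (a • m) ↔ c * a ^ p ^ e ∈ tmulAnnihilator R p e m := by
  have : a • FrobAlg.mk R p e c = FrobAlg.mk R p e (c * a ^ p ^ e) := by
    rw [Algebra.smul_def, mul_comm]
    rfl
  rw [mem_tmulAnnihilator, mem_tmulAnnihilator, TensorProduct.tmul_smul,
    TensorProduct.smul_tmul', this]

end FrobAlg

open FrobAlg

theorem submoduleFrobPow_bot (e : ℕ) : submoduleFrobPow R p (⊥ : Submodule R M) e = ⊥ := by
  have h : (⊥ : Submodule R M).subtype = 0 := by
    ext x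
    exact (Submodule.mem_bot R).1 x.2
  rw [submoduleFrobPow, h, LinearMap.lTensor_zero, LinearMap.range_zero]

theorem mem_moduleTC_bot_iff {m : M} :
    m ∈ moduleTC R p (⊥ : Submodule R M) ↔
      ∃ c ∈ Ro R, ∃ e₀ : ℕ, ∀ e ≥ e₀, c ∈ tmulAnnihilator R p e m := by
  simp only [moduleTC, submoduleFrobPow_bot, Submodule.mem_bot, Set.mem_ofPred_eq,
    mem_tmulAnnihilator]

theorem smul_mem_moduleTC_bot_of_mem_idealTC {ι : Type*} [Fintype ι] {x : ι → R} {z : R}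
    {m : M} (hz : z ∈ idealTC R p (Ideal.span (Set.range x)))
    (hx : ∀ i, x i • m ∈ moduleTC R p (⊥ : Submodule R M)) :
    z • m ∈ moduleTC R p (⊥ : Submodule R M) := by
  classical
  obtain ⟨c₀, hc₀, e₀, hz⟩ := hz
  simp only [mem_moduleTC_bot_iff, mem_tmulAnnihilator_smul] at hx ⊢
  choose c hc e hx using hx
  refine ⟨c₀ * ∏ i, c i, (roSubmonoid R).mul_mem hc₀ ((roSubmonoid R).prod_mem fun i _ => hc i),
    max e₀ (Finset.univ.sup e), fun n hn => ?_⟩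
  have hprod : ∏ i, c i ∈ (tmulAnnihilator R p n m).colon
      (frobeniusPower R (Ideal.span (Set.range x)) (p ^ n)) := by
    rw [frobeniusPower_span, Ideal.colon_span, Submodule.mem_colon]
    rintro _ ⟨_, ⟨i, rfl⟩, rfl⟩
    rw [← Finset.mul_prod_erase _ c (Finset.mem_univ i), smul_eq_mul, mul_right_comm]
    exact Ideal.mul_mem_right _ _
      (hx i n ((Finset.le_sup (Finset.mem_univ i)).trans (le_of_max_le_right hn)))
  have := Submodule.mem_colon.1 hprod _ (hz n (le_of_max_le_left hn))
  rwa [smul_eq_mul, ← mul_assoc, mul_comm (∏ i, c i)] at this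

end

/-- Let `R` be a Noetherian ring of prime characteristic `p`, `M` an
`R`-module, `I = (x_1, …, x_k)` an ideal, `z ∈ I*` and `m ∈ M` with `x_i m ∈ 0*_M` for
all `i`.  Then `z m ∈ 0*_M`; equivalently, `(0*_M :_M I*) = (0*_M :_M I)` for every
ideal `I`. -/
theorem colon_tight_closure_eq
    (R : Type u) [CommRing R] [IsNoetherianRing R]
    (p : ℕ) [Fact p.Prime] [CharP R p]
    (M : Type v) [AddCommGroup M] [Module R M] :
    (∀ (k : ℕ) (x : Fin k → R) (z : R) (m : M),
        z ∈ idealTC R p (Ideal.span (Set.range x)) →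
        (∀ i : Fin k, x i • m ∈ moduleTC R p (⊥ : Submodule R M)) →
        z • m ∈ moduleTC R p (⊥ : Submodule R M)) ∧
    (∀ I : Ideal R,
        {m : M | ∀ z ∈ idealTC R p I, z • m ∈ moduleTC R p (⊥ : Submodule R M)} =
        {m : M | ∀ a ∈ I, a • m ∈ moduleTC R p (⊥ : Submodule R M)}) := by
  have : ExpChar R p := .prime Fact.out
  refine ⟨fun k x z m hz hx => smul_mem_moduleTC_bot_of_mem_idealTC R p hz hx, fun I => ?_⟩
  obtain ⟨k, x, rfl⟩ := Submodule.fg_iff_exists_fin_generating_family.1 (IsNoetherian.noetherian I)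
  ext m
  exact ⟨fun h a ha => h a (mem_idealTC_of_mem R p ha),
    fun h z hz => smul_mem_moduleTC_bot_of_mem_idealTC R p hz fun i =>
      h _ (Ideal.subset_span ⟨i, rfl⟩)⟩
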